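/- Let ξ₀, ξ₁ ∈ ℂ with (1 − ξ₀ξ̄₀)ξ̄₁ − 2ξ̄₀ ≠ 0, and define ξ₂ = (2ξ₀ξ̄₁ + 1 − ξ₀ξ̄₀)/((1 − ξ₀ξ̄₀)ξ̄₁ − 2ξ̄₀). Then u(ξ₂) = u(ξ₁) − 2⟨u(ξ₁), u(ξ₀)⟩·u(ξ₀); i.e. ξ₂ is the direction obtained from the incoming ray direction ξ₁ by the law of mirror reflection in a surface with unit normal u(ξ₀). -/

import Mathlib

/-!
In homogeneous coordinates, `u(n / D) = (2 n D̄, |D|² - |n|²) / (|n|² + |D|²)`. Writing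
`u(ξ) = (2ξ, 1 - |ξ|²) / (1 + |ξ|²)`, the reflected vector `u(ξ₁) - 2⟨u(ξ₁), u(ξ₀)⟩ u(ξ₀)`
is a polynomial vector divided by `(1 + |ξ₀|²)² (1 + |ξ₁|²)`, and that polynomial vector is
exactly the homogeneous vector of the numerator `n` and denominator `D` of `ξ₂`. Its
normalising factor `|n|² + |D|²` equals `(1 + |ξ₀|²)² (1 + |ξ₁|²)`, which finishes the proof.
-/

open ComplexConjugate

/-- The unit vector in `ℝ³ = ℂ × ℝ` obtained from `ξ ∈ ℂ` by inverse stereographic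
projection from the south pole of the unit sphere. -/
noncomputable def stereoDir (ξ : ℂ) : ℂ × ℝ :=
  (2 * ξ / (1 + ξ * conj ξ), (1 - Complex.normSq ξ) / (1 + Complex.normSq ξ))

/-- The Euclidean inner product on `ℝ³ = ℂ × ℝ`. -/
noncomputable def euclInner (p q : ℂ × ℝ) : ℝ :=
  (p.1 * conj q.1).re + p.2 * q.2

open Complex

noncomputable def stereoHomog (n D : ℂ) : ℂ × ℝ :=
  (2 * n * conj D, normSq D - normSq n)

lemma stereoDir_div (n D : ℂ) (hD : D ≠ 0) :
    stereoDir (n / D) = (normSq n + normSq D)⁻¹ • stereoHomog n D := by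
  have hD' : normSq D ≠ 0 := normSq_eq_zero.not.mpr hD
  have hDc : conj D ≠ 0 := (map_ne_zero _).mpr hD
  ext
  · simp only [stereoDir, stereoHomog, Prod.smul_fst, real_smul, mul_conj, normSq_div]
    push_cast
    rw [← mul_conj D]
    field_simp
    ring
  · simp only [stereoDir, stereoHomog, Prod.smul_snd, smul_eq_mul, normSq_div]
    field_simp
    ring

lemma stereoDir_eq_smul_stereoHomog (ξ : ℂ) :
    stereoDir ξ = (1 + normSq ξ)⁻¹ • stereoHomog ξ 1 := by
  simpa [add_comm] using stereoDir_div ξ 1 one_ne_zero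

lemma euclInner_smul_smul (a b : ℝ) (p q : ℂ × ℝ) :
    euclInner (a • p) (b • q) = a * b * euclInner p q := by
  have : (a : ℂ) * p.1 * conj (b * q.1) = (a * b : ℝ) * (p.1 * conj q.1) := by
    push_cast [map_mul, conj_ofReal]; ring
  simp only [euclInner, Prod.smul_fst, Prod.smul_snd, real_smul, smul_eq_mul, this,
    re_ofReal_mul]
  ring

lemma ofReal_euclInner (p q : ℂ × ℝ) :
    (euclInner p q : ℂ) = (p.1 * conj q.1 + conj p.1 * q.1) / 2 + p.2 * q.2 := by
  simp only [euclInner]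
  push_cast [re_eq_add_conj, map_mul, conj_conj]
  ring

lemma stereoHomog_reflection (ξ₀ ξ₁ : ℂ) :
    stereoHomog (2 * ξ₀ * conj ξ₁ + 1 - ξ₀ * conj ξ₀)
        ((1 - ξ₀ * conj ξ₀) * conj ξ₁ - 2 * conj ξ₀) =
      (1 + normSq ξ₀) ^ 2 • stereoHomog ξ₁ 1 -
        (2 * euclInner (stereoHomog ξ₁ 1) (stereoHomog ξ₀ 1)) • stereoHomog ξ₀ 1 := by
  ext
  · simp only [stereoHomog, Prod.fst_sub, Prod.smul_fst, real_smul]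
    push_cast [ofReal_euclInner, ← mul_conj]
    simp only [map_sub, map_mul, map_one, map_ofNat, conj_conj]
    ring
  · apply ofReal_injective
    simp only [stereoHomog, Prod.snd_sub, Prod.smul_snd, smul_eq_mul]
    push_cast [ofReal_euclInner, ← mul_conj]
    simp only [map_add, map_sub, map_mul, map_one, map_ofNat, conj_conj]
    ring

lemma normSq_add_normSq_reflection (ξ₀ ξ₁ : ℂ) :
    normSq (2 * ξ₀ * conj ξ₁ + 1 - ξ₀ * conj ξ₀) +
        normSq ((1 - ξ₀ * conj ξ₀) * conj ξ₁ - 2 * conj ξ₀) =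
      (1 + normSq ξ₀) ^ 2 * (1 + normSq ξ₁) := by
  apply ofReal_injective
  push_cast [← mul_conj]
  simp only [map_add, map_sub, map_mul, map_one, map_ofNat, conj_conj]
  ring

theorem reflection_law_stereographic (ξ₀ ξ₁ : ℂ)
    (hden : (1 - ξ₀ * conj ξ₀) * conj ξ₁ - 2 * conj ξ₀ ≠ 0) :
    stereoDir ((2 * ξ₀ * conj ξ₁ + 1 - ξ₀ * conj ξ₀) /
        ((1 - ξ₀ * conj ξ₀) * conj ξ₁ - 2 * conj ξ₀)) =
      stereoDir ξ₁ -
        (2 * euclInner (stereoDir ξ₁) (stereoDir ξ₀)) • stereoDir ξ₀ := by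
  have h₀ : 1 + normSq ξ₀ ≠ 0 := (add_pos_of_pos_of_nonneg one_pos (normSq_nonneg ξ₀)).ne'
  rw [stereoDir_div _ _ hden, normSq_add_normSq_reflection, stereoHomog_reflection,
    stereoDir_eq_smul_stereoHomog ξ₀, stereoDir_eq_smul_stereoHomog ξ₁, euclInner_smul_smul,
    smul_sub, smul_smul, smul_smul, smul_smul]
  congr 2 <;> field_simp
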